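/- arXiv:1606.03161 — 4 statements merged into one kernel-verified Lean document; each statement's English description precedes it below -/
import Mathlib

section
/- For the evolving set process associated with a transition matrix K on a finite state space Ω with stationary distribution π, for every t ∈ ℕ, every S ⊆ Ω with π(S) > 0, and every y ∈ Ω: K^t(S,y) = (π(y)/π(S)) · P[y ∈ S_t | S_0 = S], where K^t(S,y) := (1/π(S)) Σ_{x∈S} π(x) K^t(x,y). -/
/-!
Given `S t = A`, the point `y` enters `S (t + 1)` with probability `Q(A, y) / π y`, since
`U (t + 1)` is uniform and independent of `U 1, …, U t`, which determine `S t`. Hence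
`π y · P[y ∈ S (t + 1)] = E[Q(S t, y)] = ∑ z, K z y · π z · P[z ∈ S t]`: the function
`y ↦ π y · P[y ∈ S t]` evolves by `ν ↦ ν K`, exactly as `y ↦ ∑ x ∈ S₀, π x K^t(x, y)` does,
and the two agree at `t = 0`.
-/

open MeasureTheory ProbabilityTheory Finset

section

variable {E α Ω : Type*}

lemma setOf_apply_eq_iUnion_preimage_singleton (X : E → α) (p : α → E → Prop) :
    {ω | p (X ω) ω} = ⋃ a, X ⁻¹' {a} ∩ {ω | p a ω} := by
  ext ω; simp

lemma MeasurableSet.setOf_apply [Countable α] {m : MeasurableSpace E} {X : E → α}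
    (hX : ∀ a, MeasurableSet[m] (X ⁻¹' {a})) {p : α → E → Prop}
    (hp : ∀ a, MeasurableSet[m] {ω | p a ω}) : MeasurableSet[m] {ω | p (X ω) ω} := by
  rw [setOf_apply_eq_iUnion_preimage_singleton]
  exact MeasurableSet.iUnion fun a => (hX a).inter (hp a)

lemma sum_measureReal_preimage_singleton_mul_sum [Fintype Ω] [MeasurableSpace E]
    (P : Measure E) [IsFiniteMeasure P] {X : E → Finset Ω}
    (hX : ∀ A, MeasurableSet (X ⁻¹' {A})) (f : Ω → ℝ) :
    ∑ A, P.real (X ⁻¹' {A}) * ∑ z ∈ A, f z = ∑ z, f z * P.real {ω | z ∈ X ω} := by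
  classical
  have hmem : ∀ z, P.real {ω | z ∈ X ω} = ∑ A with z ∈ A, P.real (X ⁻¹' {A}) := fun z => by
    rw [sum_measureReal_preimage_singleton _ fun A _ => hX A]
    congr 1; ext ω; simp
  simp_rw [hmem, mul_sum, sum_filter]
  rw [sum_comm]
  refine sum_congr rfl fun A _ => ?_
  rw [sum_ite_mem, univ_inter]
  exact sum_congr rfl fun z _ => mul_comm _ _

lemma mul_measureReal_mul_le_eq_of_uniform [MeasurableSpace E] {P : Measure E}
    {V : E → ℝ} (hV : Measurable V)
    (hunif : P.map V = (volume : Measure ℝ).restrict (Set.Icc 0 1)) {p c : ℝ} (hc : 0 ≤ c)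
    (hcp : c ≤ p) : p * P.real {ω | V ω * p ≤ c} = c := by
  rcases (hc.trans hcp).eq_or_lt with rfl | hp
  · simp [le_antisymm hcp hc]
  have hset : {ω | V ω * p ≤ c} = V ⁻¹' Set.Iic (c / p) := by
    ext ω; simp [le_div_iff₀ hp]
  have hIcc : Set.Iic (c / p) ∩ Set.Icc 0 1 = Set.Icc 0 (c / p) := by
    have : c / p ≤ 1 := (div_le_one hp).mpr hcp
    ext u; simp only [Set.mem_inter_iff, Set.mem_Iic, Set.mem_Icc]; grind
  rw [hset, ← map_measureReal_apply hV measurableSet_Iic, hunif,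
    measureReal_restrict_apply measurableSet_Iic, hIcc, Real.volume_real_Icc_of_le (by positivity),
    sub_zero, mul_div_cancel₀ _ hp.ne']

lemma mul_measureReal_mul_le_comp_eq_sum_of_indep [Fintype α] {m mE : MeasurableSpace E}
    (hm : m ≤ mE) {P : Measure E} [IsFiniteMeasure P] {X : E → α}
    (hX : ∀ a, MeasurableSet[m] (X ⁻¹' {a})) {V : E → ℝ} (hV : Measurable V)
    (hunif : P.map V = (volume : Measure ℝ).restrict (Set.Icc 0 1))
    (hindep : Indep m (MeasurableSpace.comap V inferInstance) P) {p : ℝ} {g : α → ℝ}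
    (hg : ∀ a, 0 ≤ g a) (hgp : ∀ a, g a ≤ p) :
    p * P.real {ω | V ω * p ≤ g (X ω)} = ∑ a, P.real (X ⁻¹' {a}) * g a := by
  have hVle : ∀ a, MeasurableSet {ω | V ω * p ≤ g a} :=
    fun a => measurableSet_le (hV.mul_const p) measurable_const
  have hprod : ∀ a, P.real (X ⁻¹' {a} ∩ {ω | V ω * p ≤ g a})
      = P.real (X ⁻¹' {a}) * P.real {ω | V ω * p ≤ g a} := fun a => by
    simp only [measureReal_def, ← ENNReal.toReal_mul]
    exact congrArg ENNReal.toReal <| (Indep_iff _ _ _).mp hindep _ _ (hX a)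
      ⟨{v | v * p ≤ g a}, measurableSet_le (measurable_id.mul_const p) measurable_const, rfl⟩
  rw [setOf_apply_eq_iUnion_preimage_singleton X (fun a ω => V ω * p ≤ g a),
    measureReal_iUnion_fintype, mul_sum]
  · refine sum_congr rfl fun a _ => ?_
    rw [hprod, mul_left_comm, mul_measureReal_mul_le_eq_of_uniform hV hunif (hg a) (hgp a)]
  · exact fun a b hab => Disjoint.mono Set.inter_subset_left Set.inter_subset_left
      ((Set.disjoint_singleton.mpr hab).preimage X)
  · exact fun a => (hm _ (hX a)).inter (hVle a)

lemma measurableSet_filter_mul_le_eq [Fintype Ω] {m : MeasurableSpace E}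
    {V : E → ℝ} (hV : Measurable[m] V) (π c : Ω → ℝ) (A : Finset Ω) :
    MeasurableSet[m] {ω | univ.filter (fun y => V ω * π y ≤ c y) = A} := by
  simp only [Finset.ext_iff, mem_filter, mem_univ, true_and]
  exact Measurable.setOf (Measurable.forall fun y =>
    (measurableSet_le (hV.mul_const _) measurable_const).mem.iff measurable_const)

/-- `y ∈ S (t + 1)` iff `U (t + 1) ≤ Q(S t, y) / π y`, with the denominator cleared. -/
def IsEvolvingSetProcess [Fintype Ω] (K : Matrix Ω Ω ℝ) (π : Ω → ℝ) (U : ℕ → E → ℝ)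
    (S : ℕ → E → Finset Ω) : Prop :=
  ∀ t ω, S (t + 1) ω = univ.filter (fun y => U (t + 1) ω * π y ≤ ∑ x ∈ S t ω, π x * K x y)

namespace IsEvolvingSetProcess

variable [Fintype Ω] [MeasurableSpace E] {K : Matrix Ω Ω ℝ} {π : Ω → ℝ} {U : ℕ → E → ℝ}
  {S : ℕ → E → Finset Ω} {S₀ : Finset Ω}

lemma measurableSet_preimage_singleton (hS : IsEvolvingSetProcess K π U S)
    (hU : ∀ t, StronglyMeasurable (U t)) (hS0 : ∀ ω, S 0 ω = S₀) (t : ℕ) (A : Finset Ω) :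
    MeasurableSet[Filtration.natural U hU t] (S t ⁻¹' {A}) := by
  induction t generalizing A with
  | zero =>
    have : S 0 ⁻¹' {A} = {_ω | S₀ = A} := by ext ω; simp [hS0]
    rw [this]
    exact MeasurableSet.const _
  | succ t ih =>
    have : S (t + 1) ⁻¹' {A}
        = {ω | univ.filter (fun y => U (t + 1) ω * π y ≤ ∑ x ∈ S t ω, π x * K x y) = A} := by
      ext ω; simp [hS t ω]
    rw [this]
    exact MeasurableSet.setOf_apply (fun B => (Filtration.natural U hU).mono t.le_succ _ (ih B))
      fun B => measurableSet_filter_mul_le_eq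
        (Filtration.stronglyAdapted_natural hU (t + 1)).measurable π
        (fun y => ∑ x ∈ B, π x * K x y) A

theorem sum_mul_pow_apply_eq [DecidableEq Ω] {P : Measure E} [IsProbabilityMeasure P]
    (hS : IsEvolvingSetProcess K π U S) (hS0 : ∀ ω, S 0 ω = S₀) (hK : ∀ x y, 0 ≤ K x y)
    (hπ : ∀ x, 0 ≤ π x) (hstat : ∀ y, ∑ x, π x * K x y = π y) (hUmeas : ∀ t, Measurable (U t))
    (hUunif : ∀ t, P.map (U t) = (volume : Measure ℝ).restrict (Set.Icc 0 1))
    (hUindep : iIndepFun U P) (t : ℕ) (y : Ω) :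
    ∑ x ∈ S₀, π x * (K ^ t) x y = π y * P.real {ω | y ∈ S t ω} := by
  have hU : ∀ t, StronglyMeasurable (U t) := fun t => (hUmeas t).stronglyMeasurable
  induction t generalizing y with
  | zero =>
    by_cases hy : y ∈ S₀ <;> simp [Matrix.one_apply, hS0, hy]
  | succ t ih =>
    have hindep : Indep (Filtration.natural U hU t)
        (MeasurableSpace.comap (U (t + 1)) inferInstance) P :=
      (hUindep.indep_comap_natural_of_lt hU (lt_add_one t)).symm
    have hQ_nonneg (A : Finset Ω) : 0 ≤ ∑ z ∈ A, π z * K z y :=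
      sum_nonneg fun z _ => mul_nonneg (hπ z) (hK z y)
    have hQ_le (A : Finset Ω) : ∑ z ∈ A, π z * K z y ≤ π y :=
      (sum_le_sum_of_subset_of_nonneg (subset_univ A)
        fun z _ _ => mul_nonneg (hπ z) (hK z y)).trans_eq (hstat y)
    calc ∑ x ∈ S₀, π x * (K ^ (t + 1)) x y
        = ∑ z, (∑ x ∈ S₀, π x * (K ^ t) x z) * K z y := by
          simp only [pow_succ, Matrix.mul_apply, mul_sum, sum_mul, mul_assoc]
          exact sum_comm
      _ = ∑ z, π z * K z y * P.real {ω | z ∈ S t ω} := by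
          simp only [ih]; exact sum_congr rfl fun z _ => by ring
      _ = ∑ A, P.real (S t ⁻¹' {A}) * ∑ z ∈ A, π z * K z y :=
          (sum_measureReal_preimage_singleton_mul_sum P (fun A => (Filtration.natural U hU).le t
            _ (hS.measurableSet_preimage_singleton hU hS0 t A)) _).symm
      _ = π y * P.real {ω | y ∈ S (t + 1) ω} := by
          rw [← mul_measureReal_mul_le_comp_eq_sum_of_indep ((Filtration.natural U hU).le t)
            (hS.measurableSet_preimage_singleton hU hS0 t) (hUmeas (t + 1)) (hUunif (t + 1))
            hindep hQ_nonneg hQ_le]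
          simp [hS t]

end IsEvolvingSetProcess

end

theorem evolving_set_transition_prob_general
    {E Ω : Type*} [MeasurableSpace E] [Fintype Ω] [DecidableEq Ω]
    (P : Measure E) [IsProbabilityMeasure P]
    (K : Ω → Ω → ℝ) (π : Ω → ℝ)
    (hKnonneg : ∀ x y, 0 ≤ K x y)
    (hπnonneg : ∀ x, 0 ≤ π x)
    (hstat : ∀ y, ∑ x, π x * K x y = π y)
    -- the i.i.d. uniform-[0,1] driving variables
    (U : ℕ → E → ℝ) (hUmeas : ∀ t, Measurable (U t))
    (hUunif : ∀ t, P.map (U t) = (volume : Measure ℝ).restrict (Set.Icc 0 1))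
    (hUindep : iIndepFun U P)
    -- the evolving set process
    (S : ℕ → E → Finset Ω) (S₀ : Finset Ω)
    (hS0 : ∀ ω, S 0 ω = S₀)
    (hSrec : ∀ t ω, S (t+1) ω
      = univ.filter (fun y => U (t+1) ω * π y ≤ ∑ x ∈ S t ω, π x * K x y))
    -- the iterated transition matrix
    (Kpow : ℕ → Ω → Ω → ℝ)
    (hKpow0 : ∀ x y, Kpow 0 x y = if x = y then 1 else 0)
    (hKpowS : ∀ t x y, Kpow (t+1) x y = ∑ z, K x z * Kpow t z y) :
    ∀ (t : ℕ) (y : Ω),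
      (∑ x ∈ S₀, π x * Kpow t x y) / (∑ x ∈ S₀, π x)
        = π y / (∑ x ∈ S₀, π x) * (P {ω | y ∈ S t ω}).toReal := by
  have hKpow (t : ℕ) : Kpow t = Matrix.of K ^ t := by
    induction t with
    | zero => ext x y; simp [hKpow0, Matrix.one_apply]
    | succ t ih => ext x y; simp [hKpowS, ih, pow_succ', Matrix.mul_apply]
  intro t y
  rw [hKpow, IsEvolvingSetProcess.sum_mul_pow_apply_eq (K := Matrix.of K) hSrec hS0 hKnonneg
    hπnonneg hstat hUmeas hUunif hUindep, mul_div_right_comm, measureReal_def]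

/-- Transition probabilities of the evolving set process: if `{S_t}` is the evolving
set process of a transition matrix `K` on a finite state space `Ω` with stationary
distribution `π`, started from `S₀`, then for every `t` and `y`,
`K^t(S₀, y) = (π(y)/π(S₀)) · P[y ∈ S_t]`, where
`K^t(S₀,y) = (1/π(S₀)) Σ_{x∈S₀} π(x) K^t(x,y)`. -/
theorem evolving_set_transition_prob
    {E Ω : Type*} [MeasurableSpace E] [Fintype Ω] [DecidableEq Ω]
    (P : Measure E) [IsProbabilityMeasure P]
    (K : Ω → Ω → ℝ) (π : Ω → ℝ)
    (hKnonneg : ∀ x y, 0 ≤ K x y) (hKrow : ∀ x, ∑ y, K x y = 1)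
    (hπnonneg : ∀ x, 0 ≤ π x) (hπsum : ∑ x, π x = 1)
    (hstat : ∀ y, ∑ x, π x * K x y = π y)
    -- the i.i.d. uniform-[0,1] driving variables
    (U : ℕ → E → ℝ) (hUmeas : ∀ t, Measurable (U t))
    (hUunif : ∀ t, P.map (U t) = (volume : Measure ℝ).restrict (Set.Icc 0 1))
    (hUindep : iIndepFun U P)
    -- the evolving set process
    (S : ℕ → E → Finset Ω) (S₀ : Finset Ω)
    (hS0 : ∀ ω, S 0 ω = S₀)
    (hSrec : ∀ t ω, S (t+1) ω
      = univ.filter (fun y => U (t+1) ω * π y ≤ ∑ x ∈ S t ω, π x * K x y))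
    -- the iterated transition matrix
    (Kpow : ℕ → Ω → Ω → ℝ)
    (hKpow0 : ∀ x y, Kpow 0 x y = if x = y then 1 else 0)
    (hKpowS : ∀ t x y, Kpow (t+1) x y = ∑ z, K x z * Kpow t z y)
    (hπS0 : 0 < ∑ x ∈ S₀, π x) :
    ∀ (t : ℕ) (y : Ω),
      (∑ x ∈ S₀, π x * Kpow t x y) / (∑ x ∈ S₀, π x)
        = π y / (∑ x ∈ S₀, π x) * (P {ω | y ∈ S t ω}).toReal :=
  evolving_set_transition_prob_general P K π hKnonneg hπnonneg hstat U hUmeas hUunif hUindep S S₀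
    hS0 hSrec Kpow hKpow0 hKpowS
end

section
/- Let {S_t} be the evolving set process for a 1/2-lazy reversible kernel K on a finite state space Ω with conductance Φ, and let M_t = S_t if π(S_t) ≤ 1/2 and M_t = S_t^c otherwise. Then for any starting set S and any α > 0 and t ∈ ℕ: P_{S_0=S}[π(M_t) ≥ α] ≤ (1 − Φ²/2)^t · √(min(π(S), 1−π(S))/α). -/
/-!
Track the Lyapunov function `√(π(S) ∧ π(Sᶜ))`. Given `S_t = A`, the next set is
`{y | U π(y) ≤ Q(A, y)}` for a uniform `U` independent of the past, so `π(S_{t+1})` has mean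
`π(A)`, while laziness makes the mean over `U ≤ 1/2` exceed the mean over `U > 1/2` by
`4 Q(A, Aᶜ) ≥ 4Φ (π(A) ∧ π(Aᶜ))`. Jensen's inequality for `√` on each half of `[0, 1]` turns this
gap into the drift factor `1 - Φ²/2`; iterating and applying Markov's inequality to
`√(π(M_t))` gives the bound.
-/

open MeasureTheory ProbabilityTheory Finset

theorem sqrt_half_add_sqrt_half_le {x y Φ : ℝ} (hx : 0 ≤ x) (hy : 0 ≤ y) (hΦ : 0 ≤ Φ)
    (hgap : 2 * Φ * (x + y) ≤ |x - y|) :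
    √(x / 2) + √(y / 2) ≤ (1 - Φ ^ 2 / 2) * √(x + y) := by
  rcases (add_nonneg hx hy).eq_or_lt with hsum | hsum
  · obtain ⟨rfl, rfl⟩ : x = 0 ∧ y = 0 := ⟨by linarith, by linarith⟩
    simp
  have hΦhalf : Φ ≤ 1 / 2 := by
    have : |x - y| ≤ x + y := abs_sub_le_iff.2 ⟨by linarith, by linarith⟩
    nlinarith
  have hgap2 : (2 * Φ * (x + y)) ^ 2 ≤ (x - y) ^ 2 := by
    rw [← sq_abs (x - y)]
    exact pow_le_pow_left₀ (by positivity) hgap 2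
  -- AM-GM only gives `(x + y) / 4`; the gap improves it by the factor `1 - 2Φ²`.
  have hprod : √(x / 2) * √(y / 2) ≤ (x + y) * (1 - 2 * Φ ^ 2) / 4 := by
    rw [← Real.sqrt_mul (by positivity), Real.sqrt_le_left (by nlinarith)]
    nlinarith [sq_nonneg (Φ ^ 2 * (x + y))]
  have hsq : (√(x / 2) + √(y / 2)) ^ 2 ≤ ((1 - Φ ^ 2 / 2) * √(x + y)) ^ 2 := by
    rw [add_sq, mul_pow, Real.sq_sqrt (by positivity), Real.sq_sqrt (by positivity),
      Real.sq_sqrt (by positivity)]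
    nlinarith [sq_nonneg (Φ ^ 2 * (x + y))]
  exact (sq_le_sq₀ (by positivity) (mul_nonneg (by nlinarith) (Real.sqrt_nonneg _))).1 hsq

theorem setIntegral_sqrt_le {α : Type*} [MeasurableSpace α] {μ : Measure α} {s : Set α}
    {f : α → ℝ} (hs : μ s ≠ ⊤) (hf0 : ∀ x, 0 ≤ f x) (hf : IntegrableOn f s μ)
    (hsf : IntegrableOn (fun x => √(f x)) s μ) :
    ∫ x in s, √(f x) ∂μ ≤ √(μ.real s * ∫ x in s, f x ∂μ) := by
  rcases eq_or_ne (μ s) 0 with h0 | h0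
  · simp [Measure.restrict_eq_zero.2 h0]
  have hpos : 0 < μ.real s := ENNReal.toReal_pos h0 hs
  have hjensen := Real.strictConcaveOn_sqrt.concaveOn.le_map_set_average
    Real.continuous_sqrt.continuousOn isClosed_Ici h0 hs (ae_of_all _ hf0) hf hsf
  rw [setAverage_eq, setAverage_eq, smul_eq_mul, smul_eq_mul] at hjensen
  calc ∫ x in s, √(f x) ∂μ = μ.real s * ((μ.real s)⁻¹ * ∫ x in s, √(f x) ∂μ) := by
        field_simp
    _ ≤ μ.real s * √((μ.real s)⁻¹ * ∫ x in s, f x ∂μ) := by gcongr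
    _ = √(μ.real s * ∫ x in s, f x ∂μ) := by
        rw [← Real.sqrt_sq hpos.le, ← Real.sqrt_mul (sq_nonneg _), Real.sqrt_sq hpos.le]
        field_simp

theorem integral_sqrt_le_of_gap {f : ℝ → ℝ} {Φ : ℝ} (hΦ : 0 ≤ Φ) (hf0 : ∀ u, 0 ≤ f u)
    (hf : IntegrableOn f (Set.Icc 0 1)) (hsf : IntegrableOn (fun u => √(f u)) (Set.Icc 0 1))
    (hgap : 2 * Φ * (∫ u in Set.Icc 0 1, f u) ≤
      |2 * (∫ u in Set.Icc 0 (1 / 2), f u) - ∫ u in Set.Icc 0 1, f u|) :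
    ∫ u in Set.Icc 0 1, √(f u) ≤ (1 - Φ ^ 2 / 2) * √(∫ u in Set.Icc 0 1, f u) := by
  have hsplit : Set.Icc (0 : ℝ) 1 = Set.Icc 0 (1 / 2) ∪ Set.Ioc (1 / 2) 1 :=
    (Set.Icc_union_Ioc_eq_Icc (by norm_num) (by norm_num)).symm
  have hdisj : Disjoint (Set.Icc (0 : ℝ) (1 / 2)) (Set.Ioc (1 / 2) 1) :=
    Set.disjoint_left.2 fun _ hlo hhi => not_lt.2 hlo.2 hhi.1
  have hlo : Set.Icc (0 : ℝ) (1 / 2) ⊆ Set.Icc 0 1 := Set.Icc_subset_Icc_right (by norm_num)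
  have hhi : Set.Ioc (1 / 2 : ℝ) 1 ⊆ Set.Icc 0 1 :=
    Set.Ioc_subset_Icc_self.trans (Set.Icc_subset_Icc_left (by norm_num))
  have hvol_lo : volume.real (Set.Icc (0 : ℝ) (1 / 2)) = 1 / 2 := by
    rw [Real.volume_real_Icc_of_le (by norm_num), sub_zero]
  have hvol_hi : volume.real (Set.Ioc (1 / 2 : ℝ) 1) = 1 / 2 := by
    rw [Real.volume_real_Ioc_of_le (by norm_num)]; norm_num
  have hsplit_f : ∫ u in Set.Icc 0 1, f u =
      (∫ u in Set.Icc 0 (1 / 2), f u) + ∫ u in Set.Ioc (1 / 2) 1, f u := by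
    rw [hsplit]; exact setIntegral_union hdisj measurableSet_Ioc (hf.mono_set hlo) (hf.mono_set hhi)
  rw [hsplit_f] at hgap ⊢
  rw [show ∀ L R : ℝ, 2 * L - (L + R) = L - R from fun L R => by ring] at hgap
  have hjensen_lo :=
    setIntegral_sqrt_le measure_Icc_lt_top.ne hf0 (hf.mono_set hlo) (hsf.mono_set hlo)
  have hjensen_hi :=
    setIntegral_sqrt_le measure_Ioc_lt_top.ne hf0 (hf.mono_set hhi) (hsf.mono_set hhi)
  rw [hvol_lo, one_div_mul_eq_div] at hjensen_lo
  rw [hvol_hi, one_div_mul_eq_div] at hjensen_hi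
  calc ∫ u in Set.Icc 0 1, √(f u)
      = (∫ u in Set.Icc 0 (1 / 2), √(f u)) + ∫ u in Set.Ioc (1 / 2) 1, √(f u) := by
        rw [hsplit]
        exact setIntegral_union hdisj measurableSet_Ioc (hsf.mono_set hlo) (hsf.mono_set hhi)
    _ ≤ _ := (add_le_add hjensen_lo hjensen_hi).trans <|
        sqrt_half_add_sqrt_half_le (setIntegral_nonneg measurableSet_Icc fun u _ => hf0 u)
          (setIntegral_nonneg measurableSet_Ioc fun u _ => hf0 u) hΦ hgap

theorem setIntegral_Icc_ite_mul_le_eq_min {c v q : ℝ} (hc : 0 ≤ c) (hq : 0 ≤ q) (hqv : q ≤ v) :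
    ∫ u in Set.Icc 0 c, (if u * v ≤ q then v else 0) = min (c * v) q := by
  rcases (hq.trans hqv).eq_or_lt with rfl | hv
  · simp [le_antisymm hqv hq]
  have hind :
      (fun u : ℝ => if u * v ≤ q then v else 0) = (Set.Iic (q / v)).indicator fun _ => v := by
    ext u
    simp [Set.indicator_apply, le_div_iff₀ hv]
  rw [hind, setIntegral_indicator measurableSet_Iic, setIntegral_const,
    ← Set.Ici_inter_Iic, Set.inter_assoc, Set.Iic_inter_Iic, Set.Ici_inter_Iic,
    Real.volume_real_Icc_of_le (le_min hc (div_nonneg hq hv.le)), sub_zero, smul_eq_mul,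
    min_mul_of_nonneg _ _ hv.le, div_mul_cancel₀ _ hv.ne']

theorem setIntegral_Icc_one_sub {f : ℝ → ℝ} {c : ℝ} (hc : 0 ≤ c)
    (hf : IntegrableOn f (Set.Icc 0 c)) :
    ∫ u in Set.Icc 0 c, (1 - f u) = c - ∫ u in Set.Icc 0 c, f u := by
  rw [integral_sub (integrableOn_const (μ := volume) (C := (1 : ℝ)) measure_Icc_lt_top.ne) hf,
    setIntegral_const, Real.volume_real_Icc_of_le hc, sub_zero, smul_eq_mul, mul_one]

theorem integral_comp_le_of_indepFun {E α β : Type*} [MeasurableSpace E] [MeasurableSpace α]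
    [MeasurableSpace β] {P : Measure E} [IsFiniteMeasure P] {X : E → α} {Y : E → β}
    (hX : Measurable X) (hY : Measurable Y) (hXY : IndepFun X Y P) {F : α × β → ℝ}
    (hF : Integrable F ((P.map X).prod (P.map Y))) {g : α → ℝ} (hg : Integrable g (P.map X))
    (hFg : ∀ a, ∫ b, F (a, b) ∂(P.map Y) ≤ g a) :
    ∫ ω, F (X ω, Y ω) ∂P ≤ ∫ ω, g (X ω) ∂P := by
  have hmap := (indepFun_iff_map_prod_eq_prod_map_map hX.aemeasurable hY.aemeasurable).1 hXY
  calc ∫ ω, F (X ω, Y ω) ∂P = ∫ z, F z ∂(P.map fun ω => (X ω, Y ω)) :=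
        (integral_map (hX.prodMk hY).aemeasurable (hmap ▸ hF.aestronglyMeasurable)).symm
    _ = ∫ a, ∫ b, F (a, b) ∂(P.map Y) ∂(P.map X) := by rw [hmap, integral_prod _ hF]
    _ ≤ ∫ a, g a ∂(P.map X) := integral_mono hF.integral_prod_left hg hFg
    _ = ∫ ω, g (X ω) ∂P := integral_map hX.aemeasurable hg.aestronglyMeasurable

section EvolvingSets

variable {Ω : Type*} [Fintype Ω] {K : Ω → Ω → ℝ} {π : Ω → ℝ}

structure IsLazyReversibleChain (K : Ω → Ω → ℝ) (π : Ω → ℝ) : Prop where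
  nonneg : ∀ x y, 0 ≤ K x y
  sum_row : ∀ x, ∑ y, K x y = 1
  half_le_diag : ∀ x, 1 / 2 ≤ K x x
  reversible : ∀ x y, π x * K x y = π y * K y x
  mem_stdSimplex : π ∈ stdSimplex ℝ Ω

/-- `Q(A, {y})` -/
def flow (K : Ω → Ω → ℝ) (π : Ω → ℝ) (A : Finset Ω) (y : Ω) : ℝ := ∑ x ∈ A, π x * K x y

noncomputable def evolvingSetStep (K : Ω → Ω → ℝ) (π : Ω → ℝ) (A : Finset Ω) (u : ℝ) :
    Finset Ω :=
  univ.filter fun y => u * π y ≤ flow K π A y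

def minMass (π : Ω → ℝ) (A : Finset Ω) : ℝ := min (∑ x ∈ A, π x) (1 - ∑ x ∈ A, π x)

theorem sum_le_one_of_mem_stdSimplex (hπ : π ∈ stdSimplex ℝ Ω) (A : Finset Ω) :
    ∑ x ∈ A, π x ≤ 1 :=
  hπ.2 ▸ sum_le_sum_of_subset_of_nonneg (subset_univ A) fun x _ _ => hπ.1 x

theorem minMass_nonneg (hπ : π ∈ stdSimplex ℝ Ω) (A : Finset Ω) : 0 ≤ minMass π A :=
  le_min (sum_nonneg fun x _ => hπ.1 x) (sub_nonneg.2 (sum_le_one_of_mem_stdSimplex hπ A))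

theorem measurable_evolvingSetStep (A : Finset Ω) : Measurable (evolvingSetStep K π A) :=
  measurable_finset_iff.2 fun y => by
    simpa [evolvingSetStep] using
      measurableSet_setOfPred.1 (measurableSet_le (measurable_id.mul_const (π y)) measurable_const)

theorem measurable_uncurry_evolvingSetStep :
    Measurable (Function.uncurry (evolvingSetStep K π)) :=
  measurable_from_prod_countable_right measurable_evolvingSetStep

theorem integrableOn_comp_evolvingSetStep {a b : ℝ} (g : Finset Ω → ℝ) (A : Finset Ω) :
    IntegrableOn (fun u => g (evolvingSetStep K π A u)) (Set.Icc a b) :=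
  Integrable.of_finite.comp_measurable (measurable_evolvingSetStep A)

namespace IsLazyReversibleChain

theorem flow_nonneg (hK : IsLazyReversibleChain K π) (A : Finset Ω) (y : Ω) :
    0 ≤ flow K π A y :=
  sum_nonneg fun x _ => mul_nonneg (hK.mem_stdSimplex.1 x) (hK.nonneg x y)

theorem half_le_flow (hK : IsLazyReversibleChain K π) {A : Finset Ω} {y : Ω} (hy : y ∈ A) :
    π y / 2 ≤ flow K π A y :=
  calc π y / 2 ≤ π y * K y y := by nlinarith [hK.half_le_diag y, hK.mem_stdSimplex.1 y]
    _ ≤ flow K π A y :=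
      single_le_sum (f := fun x => π x * K x y)
        (fun x _ => mul_nonneg (hK.mem_stdSimplex.1 x) (hK.nonneg x y)) hy

theorem sum_flow (hK : IsLazyReversibleChain K π) (A : Finset Ω) :
    ∑ y, flow K π A y = ∑ x ∈ A, π x := by
  simp only [flow]
  rw [sum_comm]
  exact sum_congr rfl fun x _ => by rw [← mul_sum, hK.sum_row, mul_one]

end IsLazyReversibleChain

section Adapted

variable {E : Type*} [MeasurableSpace E] {U : ℕ → E → ℝ} {S : ℕ → E → Finset Ω} {S₀ : Finset Ω}

theorem measurable_natural_evolvingSet (hU : ∀ t, StronglyMeasurable (U t))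
    (hS0 : ∀ ω, S 0 ω = S₀)
    (hSrec : ∀ t ω, S (t + 1) ω = evolvingSetStep K π (S t ω) (U (t + 1) ω)) :
    ∀ t, Measurable[Filtration.natural U hU t] (S t)
  | 0 => by
    rw [show S 0 = fun _ => S₀ from funext hS0]
    exact measurable_const
  | t + 1 => by
    rw [show S (t + 1) = fun ω => evolvingSetStep K π (S t ω) (U (t + 1) ω) from funext (hSrec t)]
    exact measurable_uncurry_evolvingSetStep.comp
      (((measurable_natural_evolvingSet hU hS0 hSrec t).mono
        ((Filtration.natural U hU).mono t.le_succ) le_rfl).prodMk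
        (Filtration.stronglyAdapted_natural hU (t + 1)).measurable)

theorem indepFun_evolvingSet_succ {P : Measure E} (hU : ∀ t, Measurable (U t))
    (hUindep : iIndepFun U P) (hS0 : ∀ ω, S 0 ω = S₀)
    (hSrec : ∀ t ω, S (t + 1) ω = evolvingSetStep K π (S t ω) (U (t + 1) ω)) (t : ℕ) :
    IndepFun (S t) (U (t + 1)) P := by
  rw [IndepFun_iff_Indep]
  exact indep_of_indep_of_le_left
    (hUindep.indep_comap_natural_of_lt (fun t => (hU t).stronglyMeasurable) t.lt_succ_self).symm
    (measurable_natural_evolvingSet _ hS0 hSrec t).comap_le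

end Adapted

variable [DecidableEq Ω]

theorem sum_compl_of_mem_stdSimplex (hπ : π ∈ stdSimplex ℝ Ω) (A : Finset Ω) :
    ∑ x ∈ Aᶜ, π x = 1 - ∑ x ∈ A, π x := by
  rw [← hπ.2, ← sum_add_sum_compl A π, add_sub_cancel_left]

theorem sum_ite_compl_eq_minMass (hπ : π ∈ stdSimplex ℝ Ω) (A : Finset Ω) :
    ∑ x ∈ (if ∑ x ∈ A, π x ≤ 1 / 2 then A else Aᶜ), π x = minMass π A := by
  split_ifs with hA
  · exact (min_eq_left (by linarith)).symm
  · rw [sum_compl_of_mem_stdSimplex hπ]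
    exact (min_eq_right (by linarith)).symm

def conductanceRatios (K : Ω → Ω → ℝ) (π : Ω → ℝ) : Set ℝ :=
  {r : ℝ | ∃ A : Finset Ω, 0 < ∑ x ∈ A, π x ∧ (∑ x ∈ A, π x) ≤ 1 / 2 ∧
    r = (∑ x ∈ A, ∑ y ∈ Aᶜ, π x * K x y) / ∑ x ∈ A, π x}

noncomputable def conductance (K : Ω → Ω → ℝ) (π : Ω → ℝ) : ℝ := sInf (conductanceRatios K π)

namespace IsLazyReversibleChain

theorem flow_add_flow_compl (hK : IsLazyReversibleChain K π) (A : Finset Ω) (y : Ω) :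
    flow K π A y + flow K π Aᶜ y = π y := by
  rw [flow, flow, sum_add_sum_compl, sum_congr rfl fun x _ => hK.reversible x y, ← mul_sum,
    hK.sum_row, mul_one]

theorem flow_le (hK : IsLazyReversibleChain K π) (A : Finset Ω) (y : Ω) : flow K π A y ≤ π y := by
  linarith [hK.flow_add_flow_compl A y, hK.flow_nonneg Aᶜ y]

theorem flow_le_half (hK : IsLazyReversibleChain K π) {A : Finset Ω} {y : Ω} (hy : y ∉ A) :
    flow K π A y ≤ π y / 2 := by
  linarith [hK.flow_add_flow_compl A y, hK.half_le_flow (mem_compl.2 hy)]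

theorem sum_flow_compl (hK : IsLazyReversibleChain K π) (A : Finset Ω) :
    ∑ y ∈ A, flow K π Aᶜ y = ∑ y ∈ Aᶜ, flow K π A y := by
  simp only [flow]
  rw [sum_comm]
  exact sum_congr rfl fun x _ => sum_congr rfl fun y _ => hK.reversible x y

theorem sum_compl_flow_le_half (hK : IsLazyReversibleChain K π) (A : Finset Ω) :
    ∑ y ∈ Aᶜ, flow K π A y ≤ (∑ x ∈ A, π x) / 2 := by
  have hA : ∑ y ∈ A, π y / 2 ≤ ∑ y ∈ A, flow K π A y := sum_le_sum fun y hy => hK.half_le_flow hy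
  rw [← sum_div] at hA
  linarith [sum_add_sum_compl A (flow K π A), hK.sum_flow A]

theorem zero_mem_lowerBounds_conductanceRatios (hK : IsLazyReversibleChain K π) :
    0 ∈ lowerBounds (conductanceRatios K π) := by
  rintro _ ⟨A, hpos, -, rfl⟩
  exact div_nonneg (sum_nonneg fun x _ => sum_nonneg fun y _ =>
    mul_nonneg (hK.mem_stdSimplex.1 x) (hK.nonneg x y)) hpos.le

theorem conductance_nonneg (hK : IsLazyReversibleChain K π) : 0 ≤ conductance K π :=
  Real.sInf_nonneg fun _ hr => hK.zero_mem_lowerBounds_conductanceRatios hr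

theorem conductance_mul_le (hK : IsLazyReversibleChain K π) {A : Finset Ω}
    (hA : ∑ x ∈ A, π x ≤ 1 / 2) :
    conductance K π * ∑ x ∈ A, π x ≤ ∑ y ∈ Aᶜ, flow K π A y := by
  rcases (sum_nonneg fun x _ => hK.mem_stdSimplex.1 x : 0 ≤ ∑ x ∈ A, π x).eq_or_lt with h0 | hpos
  · rw [← h0, mul_zero]
    exact sum_nonneg fun y _ => hK.flow_nonneg A y
  calc conductance K π * ∑ x ∈ A, π x
      ≤ (∑ x ∈ A, ∑ y ∈ Aᶜ, π x * K x y) / (∑ x ∈ A, π x) * ∑ x ∈ A, π x := by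
        gcongr
        exact csInf_le ⟨0, hK.zero_mem_lowerBounds_conductanceRatios⟩ ⟨A, hpos, hA, rfl⟩
    _ = ∑ y ∈ Aᶜ, flow K π A y := by rw [div_mul_cancel₀ _ hpos.ne', sum_comm]; rfl

theorem conductance_le_half (hK : IsLazyReversibleChain K π) : conductance K π ≤ 1 / 2 := by
  rcases (conductanceRatios K π).eq_empty_or_nonempty with h | ⟨_, A, hpos, hA, -⟩
  · rw [conductance, h, Real.sInf_empty]
    norm_num
  · have := (hK.conductance_mul_le hA).trans (hK.sum_compl_flow_le_half A)
    exact le_of_mul_le_mul_right (by linarith) hpos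

theorem setIntegral_sum_evolvingSetStep (hK : IsLazyReversibleChain K π) (A : Finset Ω)
    {c : ℝ} (hc : 0 ≤ c) :
    ∫ u in Set.Icc 0 c, ∑ x ∈ evolvingSetStep K π A u, π x =
      ∑ y, min (c * π y) (flow K π A y) := by
  simp only [evolvingSetStep, sum_filter]
  rw [integral_finsetSum]
  · exact sum_congr rfl fun y _ =>
      setIntegral_Icc_ite_mul_le_eq_min hc (hK.flow_nonneg A y) (hK.flow_le A y)
  · intro y _
    have hmeas : MeasurableSet {u : ℝ | u * π y ≤ flow K π A y} :=
      measurableSet_le (measurable_id.mul_const _) measurable_const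
    exact (integrableOn_const (μ := volume) (s := Set.Icc 0 c) (C := π y)
      measure_Icc_lt_top.ne).indicator hmeas

theorem setIntegral_Icc_one_sum_evolvingSetStep (hK : IsLazyReversibleChain K π) (A : Finset Ω) :
    ∫ u in Set.Icc 0 1, ∑ x ∈ evolvingSetStep K π A u, π x = ∑ x ∈ A, π x := by
  rw [hK.setIntegral_sum_evolvingSetStep A zero_le_one, ← hK.sum_flow A]
  exact sum_congr rfl fun y _ => by rw [one_mul, min_eq_right (hK.flow_le A y)]

theorem setIntegral_Icc_half_sum_evolvingSetStep (hK : IsLazyReversibleChain K π)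
    (A : Finset Ω) :
    ∫ u in Set.Icc 0 (1 / 2), ∑ x ∈ evolvingSetStep K π A u, π x =
      (∑ x ∈ A, π x) / 2 + ∑ y ∈ Aᶜ, flow K π A y := by
  rw [hK.setIntegral_sum_evolvingSetStep A (by norm_num), ← sum_add_sum_compl A, sum_div]
  congr 1
  · exact sum_congr rfl fun y hy => by rw [one_div_mul_eq_div, min_eq_left (hK.half_le_flow hy)]
  · exact sum_congr rfl fun y hy => by
      rw [one_div_mul_eq_div, min_eq_right (hK.flow_le_half (mem_compl.1 hy))]

theorem integral_sqrt_minMass_evolvingSetStep_le_of_gap (hK : IsLazyReversibleChain K π)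
    (A : Finset Ω) {f : Finset Ω → ℝ} (hf0 : ∀ B, 0 ≤ f B) (hminMass : ∀ B, minMass π B ≤ f B)
    (hgap : 2 * conductance K π * (∫ u in Set.Icc 0 1, f (evolvingSetStep K π A u)) ≤
      |2 * (∫ u in Set.Icc 0 (1 / 2), f (evolvingSetStep K π A u)) -
        ∫ u in Set.Icc 0 1, f (evolvingSetStep K π A u)|) :
    ∫ u in Set.Icc 0 1, √(minMass π (evolvingSetStep K π A u)) ≤
      (1 - conductance K π ^ 2 / 2) * √(∫ u in Set.Icc 0 1, f (evolvingSetStep K π A u)) :=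
  calc _ ≤ ∫ u in Set.Icc 0 1, √(f (evolvingSetStep K π A u)) :=
        integral_mono_of_nonneg (ae_of_all _ fun _ => Real.sqrt_nonneg _)
          (integrableOn_comp_evolvingSetStep (fun B => √(f B)) A)
          (ae_of_all _ fun _ => Real.sqrt_le_sqrt (hminMass _))
    _ ≤ _ := integral_sqrt_le_of_gap hK.conductance_nonneg (fun _ => hf0 _)
        (integrableOn_comp_evolvingSetStep f A)
        (integrableOn_comp_evolvingSetStep (fun B => √(f B)) A) hgap

theorem integral_sqrt_minMass_evolvingSetStep_le (hK : IsLazyReversibleChain K π)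
    (A : Finset Ω) :
    ∫ u in Set.Icc 0 1, √(minMass π (evolvingSetStep K π A u)) ≤
      (1 - conductance K π ^ 2 / 2) * √(minMass π A) := by
  set p := ∑ x ∈ A, π x
  set q := ∑ y ∈ Aᶜ, flow K π A y
  have hfull : ∫ u in Set.Icc 0 1, ∑ x ∈ evolvingSetStep K π A u, π x = p :=
    hK.setIntegral_Icc_one_sum_evolvingSetStep A
  have hlow : ∫ u in Set.Icc 0 (1 / 2), ∑ x ∈ evolvingSetStep K π A u, π x = p / 2 + q :=
    hK.setIntegral_Icc_half_sum_evolvingSetStep A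
  have hq : 0 ≤ q := sum_nonneg fun y _ => hK.flow_nonneg A y
  rcases le_or_gt p (1 / 2) with hA | hA
  · refine (hK.integral_sqrt_minMass_evolvingSetStep_le_of_gap A (f := fun B => ∑ x ∈ B, π x)
      (fun B => sum_nonneg fun x _ => hK.mem_stdSimplex.1 x) (fun B => min_le_left _ _) ?_).trans_eq ?_
    · rw [hfull, hlow, show 2 * (p / 2 + q) - p = 2 * q by ring, abs_of_nonneg (by positivity)]
      linarith [hK.conductance_mul_le hA]
    · rw [hfull, minMass, min_eq_left (by linarith)]
  · have hcompl : conductance K π * (1 - p) ≤ q := by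
      have := hK.conductance_mul_le (A := Aᶜ)
        (by rw [sum_compl_of_mem_stdSimplex hK.mem_stdSimplex]; linarith)
      rwa [compl_compl, hK.sum_flow_compl, sum_compl_of_mem_stdSimplex hK.mem_stdSimplex] at this
    have hsub {c : ℝ} (hc : 0 ≤ c) :
        ∫ u in Set.Icc 0 c, (1 - ∑ x ∈ evolvingSetStep K π A u, π x) =
          c - ∫ u in Set.Icc 0 c, ∑ x ∈ evolvingSetStep K π A u, π x :=
      setIntegral_Icc_one_sub hc (integrableOn_comp_evolvingSetStep (fun B => ∑ x ∈ B, π x) A)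
    refine (hK.integral_sqrt_minMass_evolvingSetStep_le_of_gap A
      (f := fun B => 1 - ∑ x ∈ B, π x)
      (fun B => sub_nonneg.2 (sum_le_one_of_mem_stdSimplex hK.mem_stdSimplex B))
      (fun B => min_le_right _ _) ?_).trans_eq ?_
    · rw [hsub zero_le_one, hsub (by norm_num), hfull, hlow,
        show 2 * (1 / 2 - (p / 2 + q)) - (1 - p) = -(2 * q) by ring, abs_neg,
        abs_of_nonneg (by positivity)]
      linarith
    · rw [hsub zero_le_one, hfull, minMass, min_eq_right (by linarith)]

theorem integral_sqrt_minMass_evolvingSetStep_comp_le (hK : IsLazyReversibleChain K π)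
    {E : Type*} [MeasurableSpace E] {P : Measure E} [IsFiniteMeasure P] {X : E → Finset Ω}
    {V : E → ℝ} (hX : Measurable X) (hV : Measurable V)
    (hV_unif : P.map V = volume.restrict (Set.Icc 0 1)) (hXV : IndepFun X V P) :
    ∫ ω, √(minMass π (evolvingSetStep K π (X ω) (V ω))) ∂P ≤
      (1 - conductance K π ^ 2 / 2) * ∫ ω, √(minMass π (X ω)) ∂P := by
  rw [← integral_const_mul]
  exact integral_comp_le_of_indepFun hX hV hXV
    (F := fun z => √(minMass π (Function.uncurry (evolvingSetStep K π) z)))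
    (g := fun A => (1 - conductance K π ^ 2 / 2) * √(minMass π A))
    ((Integrable.of_finite (f := fun A => √(minMass π A))).comp_measurable
      measurable_uncurry_evolvingSetStep)
    Integrable.of_finite fun A => by
      rw [hV_unif]
      exact hK.integral_sqrt_minMass_evolvingSetStep_le A

theorem integral_sqrt_minMass_evolvingSet_le (hK : IsLazyReversibleChain K π) {E : Type*}
    [MeasurableSpace E] {P : Measure E} [IsProbabilityMeasure P] {U : ℕ → E → ℝ}
    {S : ℕ → E → Finset Ω} {S₀ : Finset Ω}
    (hU : ∀ t, Measurable (U t))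
    (hUunif : ∀ t, P.map (U t) = volume.restrict (Set.Icc 0 1)) (hUindep : iIndepFun U P)
    (hS0 : ∀ ω, S 0 ω = S₀)
    (hSrec : ∀ t ω, S (t + 1) ω = evolvingSetStep K π (S t ω) (U (t + 1) ω)) (t : ℕ) :
    ∫ ω, √(minMass π (S t ω)) ∂P ≤ (1 - conductance K π ^ 2 / 2) ^ t * √(minMass π S₀) := by
  have hc : 0 ≤ 1 - conductance K π ^ 2 / 2 := by
    nlinarith [hK.conductance_nonneg, hK.conductance_le_half]
  induction t with
  | zero => simp [hS0]
  | succ t ih =>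
    have hSt : Measurable (S t) :=
      (measurable_natural_evolvingSet (fun t => (hU t).stronglyMeasurable) hS0 hSrec t).mono
        (Filtration.le _ t) le_rfl
    calc ∫ ω, √(minMass π (S (t + 1) ω)) ∂P
        = ∫ ω, √(minMass π (evolvingSetStep K π (S t ω) (U (t + 1) ω))) ∂P := by
          simp only [hSrec]
      _ ≤ (1 - conductance K π ^ 2 / 2) * ∫ ω, √(minMass π (S t ω)) ∂P :=
          hK.integral_sqrt_minMass_evolvingSetStep_comp_le hSt (hU _) (hUunif _)
            (indepFun_evolvingSet_succ hU hUindep hS0 hSrec t)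
      _ ≤ (1 - conductance K π ^ 2 / 2) * ((1 - conductance K π ^ 2 / 2) ^ t * √(minMass π S₀)) :=
          mul_le_mul_of_nonneg_left ih hc
      _ = _ := by ring

end IsLazyReversibleChain

end EvolvingSets

/-- Decay estimate for the evolving set process of a `1/2`-lazy reversible chain with
conductance `Φ`: with `M_t = S_t` if `π(S_t) ≤ 1/2` and `M_t = S_tᶜ` otherwise,
`P[π(M_t) ≥ a] ≤ (1 − Φ²/2)^t √(min(π(S₀), 1−π(S₀))/a)` for all `a > 0`. -/
theorem evolving_set_decay
    {E Ω : Type*} [MeasurableSpace E] [Fintype Ω] [DecidableEq Ω]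
    (P : Measure E) [IsProbabilityMeasure P]
    (K : Ω → Ω → ℝ) (π : Ω → ℝ)
    (hKnonneg : ∀ x y, 0 ≤ K x y) (hKrow : ∀ x, ∑ y, K x y = 1)
    (hlazy : ∀ x, 1/2 ≤ K x x)
    (hrev : ∀ x y, π x * K x y = π y * K y x)
    (hπnonneg : ∀ x, 0 ≤ π x) (hπsum : ∑ x, π x = 1)
    (U : ℕ → E → ℝ) (hUmeas : ∀ t, Measurable (U t))
    (hUunif : ∀ t, P.map (U t) = (volume : Measure ℝ).restrict (Set.Icc 0 1))
    (hUindep : iIndepFun U P)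
    (S : ℕ → E → Finset Ω) (S₀ : Finset Ω)
    (hS0 : ∀ ω, S 0 ω = S₀)
    (hSrec : ∀ t ω, S (t+1) ω
      = univ.filter (fun y => U (t+1) ω * π y ≤ ∑ x ∈ S t ω, π x * K x y))
    -- the conductance
    (Φ : ℝ)
    (hΦ : Φ = sInf {r : ℝ | ∃ A : Finset Ω,
      0 < ∑ x ∈ A, π x ∧ (∑ x ∈ A, π x) ≤ 1/2 ∧
      r = (∑ x ∈ A, ∑ y ∈ Aᶜ, π x * K x y) / ∑ x ∈ A, π x})
    -- the complemented process
    (M : ℕ → E → Finset Ω)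
    (hM : ∀ t ω, M t ω = if (∑ x ∈ S t ω, π x) ≤ 1/2 then S t ω else (S t ω)ᶜ) :
    ∀ (a : ℝ), 0 < a → ∀ t : ℕ,
      (P {ω | a ≤ ∑ x ∈ M t ω, π x}).toReal
        ≤ (1 - Φ^2/2)^t
          * Real.sqrt (min (∑ x ∈ S₀, π x) (1 - ∑ x ∈ S₀, π x) / a) := by
  intro a ha t
  have hK : IsLazyReversibleChain K π := ⟨hKnonneg, hKrow, hlazy, hrev, hπnonneg, hπsum⟩
  have hΦ : Φ = conductance K π := hΦ
  have hSt : Measurable (S t) :=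
    (measurable_natural_evolvingSet (fun t => (hUmeas t).stronglyMeasurable) hS0 hSrec t).mono
      (Filtration.le _ t) le_rfl
  have hevent : {ω | a ≤ ∑ x ∈ M t ω, π x} = {ω | √a ≤ √(minMass π (S t ω))} := by
    ext ω
    rw [Set.mem_ofPred_eq, Set.mem_ofPred_eq, hM, sum_ite_compl_eq_minMass hK.mem_stdSimplex,
      Real.sqrt_le_sqrt_iff (minMass_nonneg hK.mem_stdSimplex _)]
  have hmarkov := mul_meas_ge_le_integral_of_nonneg (ae_of_all P fun ω => Real.sqrt_nonneg _)
    ((Integrable.of_finite (f := fun A => √(minMass π A))).comp_measurable hSt) √a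
  rw [← hevent] at hmarkov
  change P.real _ ≤ (1 - Φ ^ 2 / 2) ^ t * √(minMass π S₀ / a)
  rw [hΦ, Real.sqrt_div (minMass_nonneg hK.mem_stdSimplex S₀), ← mul_div_assoc,
    le_div_iff₀ (Real.sqrt_pos.2 ha), mul_comm]
  exact hmarkov.trans (hK.integral_sqrt_minMass_evolvingSet_le hUmeas hUunif hUindep hS0 hSrec t)
end

section
/- Let K be a transition kernel on a state space Ω with stationary distribution π and conductance Φ. Then the total variation mixing time satisfies τ ≥ 1/(4Φ). -/
/-!
Write `Φ(A) = π(A)⁻¹ ∫_A K(x, Aᶜ) π(dx)`. Started from `π` restricted to `A`, a stationary chain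
leaves `A` in any single step with probability at most `Φ(A)`, so by a union bound it has left `A`
by time `t` with probability at most `t Φ(A)`. Hence some `x ∈ A` has `Kᵗ(x, Aᶜ) ≤ t Φ(A)`, and
then `‖Kᵗ(x, ·) − π‖_TV ≥ Kᵗ(x, A) − π(A) ≥ 1/2 − t Φ(A)`. At `t = τ` this is `< 1/4`, so
`τ Φ(A) > 1/4` for every admissible `A`.
-/

open MeasureTheory ProbabilityTheory

/-- The total variation distance `sup_A (μ(A) − ν(A))` between two measures. -/
noncomputable def tvDist' {Ω : Type*} [MeasurableSpace Ω] (μ ν : Measure Ω) : ℝ :=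
  ⨆ A : {A : Set Ω // MeasurableSet A}, ((μ A).toReal - (ν A).toReal)

open scoped ENNReal

theorem toReal_sub_le_tvDist' {Ω : Type*} [MeasurableSpace Ω] (μ ν : Measure Ω) [IsFiniteMeasure μ]
    {A : Set Ω} (hA : MeasurableSet A) : (μ A).toReal - (ν A).toReal ≤ tvDist' μ ν := by
  refine le_ciSup (f := fun B : {A : Set Ω // MeasurableSet A} => (μ B).toReal - (ν B).toReal)
    ⟨(μ Set.univ).toReal, ?_⟩ ⟨A, hA⟩
  rintro _ ⟨B, rfl⟩
  have hμB : (μ B).toReal ≤ (μ Set.univ).toReal :=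
    ENNReal.toReal_mono (measure_ne_top μ _) (measure_mono (Set.subset_univ _))
  linarith [ENNReal.toReal_nonneg (a := ν B)]

namespace ProbabilityTheory.Kernel

variable {α : Type*} [MeasurableSpace α] {κ : Kernel α α} {π : Measure α} {A : Set α}

theorem pow_zero_apply (κ : Kernel α α) (a : α) : (κ ^ 0) a = Measure.dirac a := id_apply a

theorem pow_succ_apply (κ : Kernel α α) (t : ℕ) (a : α) :
    (κ ^ (t + 1)) a = ((κ ^ t) a).bind κ := by
  rw [pow_succ']
  exact comp_apply κ (κ ^ t) a

theorem eq_pow_of_iterate {Kpow : ℕ → Kernel α α} (h0 : ∀ a, Kpow 0 a = Measure.dirac a)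
    (hsucc : ∀ t a, Kpow (t + 1) a = (Kpow t a).bind κ) : Kpow = (κ ^ ·) := by
  funext t
  induction t with
  | zero => ext1 a; rw [h0, pow_zero_apply]
  | succ t ih => ext1 a; rw [hsucc, pow_succ_apply, ih]

instance _root_.ProbabilityTheory.IsMarkovKernel.pow [IsMarkovKernel κ] (t : ℕ) :
    IsMarkovKernel (κ ^ t) := by
  induction t with
  | zero => rw [_root_.pow_zero]; exact inferInstanceAs (IsMarkovKernel Kernel.id)
  | succ t ih => rw [pow_succ']; exact IsMarkovKernel.comp κ (κ ^ t)

theorem Invariant.pow (hκ : Invariant κ π) (t : ℕ) : Invariant (κ ^ t) π := by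
  induction t with
  | zero => rw [_root_.pow_zero]; exact Measure.bind_dirac
  | succ t ih => rw [pow_succ']; exact hκ.comp ih

theorem bind_apply_compl_le [IsMarkovKernel κ] (μ : Measure α) (hA : MeasurableSet A) :
    μ.bind κ Aᶜ ≤ ∫⁻ z in A, κ z Aᶜ ∂μ + μ Aᶜ := by
  rw [Measure.bind_apply hA.compl κ.aemeasurable, ← lintegral_add_compl _ hA]
  gcongr
  calc ∫⁻ z in Aᶜ, κ z Aᶜ ∂μ ≤ ∫⁻ _ in Aᶜ, 1 ∂μ :=
        setLIntegral_mono' hA.compl fun _ _ => prob_le_one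
    _ = μ Aᶜ := setLIntegral_one _

theorem setLIntegral_pow_compl_le [IsMarkovKernel κ] (hκ : Invariant κ π) (hA : MeasurableSet A)
    (t : ℕ) : ∫⁻ x in A, (κ ^ t) x Aᶜ ∂π ≤ t * ∫⁻ x in A, κ x Aᶜ ∂π := by
  induction t with
  | zero =>
    have hstay : ∀ x ∈ A, (κ ^ 0) x Aᶜ = 0 := fun x hx => by
      rw [pow_zero_apply, Measure.dirac_apply' x hA.compl]
      simp [hx]
    rw [setLIntegral_congr_fun hA hstay, lintegral_zero]
    exact zero_le
  | succ t ih =>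
    have hescape : Measurable fun z => κ z Aᶜ := κ.measurable_coe hA.compl
    calc ∫⁻ x in A, (κ ^ (t + 1)) x Aᶜ ∂π
        ≤ ∫⁻ x in A, (∫⁻ z in A, κ z Aᶜ ∂(κ ^ t) x + (κ ^ t) x Aᶜ) ∂π := by
          gcongr with x
          rw [pow_succ_apply]
          exact bind_apply_compl_le _ hA
      _ = ∫⁻ x in A, ∫⁻ z in A, κ z Aᶜ ∂(κ ^ t) x ∂π + ∫⁻ x in A, (κ ^ t) x Aᶜ ∂π :=
          lintegral_add_left (hescape.setLIntegral_kernel hA) _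
      _ ≤ ∫⁻ x, ∫⁻ z in A, κ z Aᶜ ∂(κ ^ t) x ∂π + t * ∫⁻ x in A, κ x Aᶜ ∂π := by
          gcongr
          exact Measure.restrict_le_self
      _ = (t + 1 : ℕ) * ∫⁻ x in A, κ x Aᶜ ∂π := by
          simp_rw [← lintegral_indicator hA]
          rw [← Measure.lintegral_bind (κ ^ t).aemeasurable (hescape.indicator hA).aemeasurable,
            (hκ.pow t).def]
          push_cast
          ring

noncomputable def bottleneckRatio (κ : Kernel α α) (π : Measure α) (A : Set α) : ℝ :=
  (∫ x in A, (κ x Aᶜ).toReal ∂π) / (π A).toReal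

theorem exists_pow_apply_compl_le [IsMarkovKernel κ] [IsFiniteMeasure π] (hκ : Invariant κ π)
    (hA : MeasurableSet A) (hπA : π A ≠ 0) (t : ℕ) :
    ∃ x ∈ A, ((κ ^ t) x Aᶜ).toReal ≤ t * κ.bottleneckRatio π A := by
  obtain ⟨x, hxA, hx⟩ := exists_le_setLAverage hπA (measure_ne_top π A)
    ((κ ^ t).measurable_coe hA.compl).aemeasurable
  have hflow : ∫⁻ x in A, κ x Aᶜ ∂π ≠ ∞ := by
    refine ne_top_of_le_ne_top (measure_ne_top π A) ?_
    rw [← setLIntegral_one]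
    exact setLIntegral_mono' hA fun x _ => prob_le_one
  have hbound : (κ ^ t) x Aᶜ ≤ t * (∫⁻ x in A, κ x Aᶜ ∂π) / π A := by
    refine hx.trans ?_
    rw [setLAverage_eq]
    gcongr
    exact setLIntegral_pow_compl_le hκ hA t
  refine ⟨x, hxA, ?_⟩
  calc ((κ ^ t) x Aᶜ).toReal ≤ (t * (∫⁻ x in A, κ x Aᶜ ∂π) / π A).toReal :=
        ENNReal.toReal_mono (ENNReal.div_ne_top (ENNReal.mul_ne_top (by simp) hflow) hπA) hbound
    _ = t * κ.bottleneckRatio π A := by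
        rw [bottleneckRatio, ENNReal.toReal_div, ENNReal.toReal_mul, ENNReal.toReal_natCast,
          integral_toReal (κ.measurable_coe hA.compl).aemeasurable
            (Filter.Eventually.of_forall fun x => measure_lt_top _ _), mul_div_assoc]

theorem lt_mul_bottleneckRatio_of_tvDist'_lt [IsMarkovKernel κ] [IsProbabilityMeasure π]
    (hκ : Invariant κ π) (hA : MeasurableSet A) (hπA : 0 < π A) (hπA_le : π A ≤ 1 / 2) {t : ℕ}
    (hmix : ∀ x, tvDist' ((κ ^ t) x) π < 1 / 4) : 1 / 4 < t * κ.bottleneckRatio π A := by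
  obtain ⟨x, -, hx⟩ := exists_pow_apply_compl_le hκ hA hπA.ne' t
  have hcompl : ((κ ^ t) x Aᶜ).toReal = 1 - ((κ ^ t) x A).toReal := probReal_compl_eq_one_sub hA
  have hhalf : (π A).toReal ≤ 1 / 2 := by
    simpa using ENNReal.toReal_mono (by norm_num) hπA_le
  linarith [toReal_sub_le_tvDist' ((κ ^ t) x) π hA, hmix x, hcompl]

end ProbabilityTheory.Kernel

/-- For a Markov kernel `K` with stationary distribution `π` and conductance `Φ`,
the total variation mixing time satisfies `τ ≥ 1/(4Φ)`. -/
theorem mixing_time_ge_inv_conductance {Ω : Type*} [MeasurableSpace Ω]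
    (K : ProbabilityTheory.Kernel Ω Ω) [IsMarkovKernel K]
    (π : Measure Ω) [IsProbabilityMeasure π]
    (hstat : π.bind (fun x => K x) = π)
    (Kpow : ℕ → ProbabilityTheory.Kernel Ω Ω)
    (hKpow0 : ∀ x, Kpow 0 x = Measure.dirac x)
    (hKpowS : ∀ t x, Kpow (t+1) x = (Kpow t x).bind (fun z => K z))
    (Φ : ℝ)
    (hΦ : Φ = sInf {r : ℝ | ∃ A : Set Ω, MeasurableSet A ∧
      0 < π A ∧ π A ≤ 1/2 ∧
      r = (∫ x in A, ((K x) Aᶜ).toReal ∂π) / (π A).toReal})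
    (hΦne : ∃ A : Set Ω, MeasurableSet A ∧ 0 < π A ∧ π A ≤ 1/2)
    (τ : ℕ)
    (hmix : ∃ t : ℕ, ∀ x, tvDist' (Kpow t x) π < 1/4)
    (hτ : τ = sInf {t : ℕ | ∀ x, tvDist' (Kpow t x) π < 1/4}) :
    1 / (4 * Φ) ≤ (τ : ℝ) := by
  obtain rfl : Kpow = (K ^ ·) := Kernel.eq_pow_of_iterate hKpow0 hKpowS
  have hτmix : ∀ x, tvDist' ((K ^ τ) x) π < 1 / 4 := hτ ▸ Nat.sInf_mem hmix
  have hratio : ∀ A, MeasurableSet A → 0 < π A → π A ≤ 1 / 2 → 1 / 4 < τ * K.bottleneckRatio π A :=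
    fun A hA hπA hπA_le => Kernel.lt_mul_bottleneckRatio_of_tvDist'_lt hstat hA hπA hπA_le hτmix
  obtain ⟨A₀, hA₀, hπA₀, hπA₀_le⟩ := hΦne
  have hτ_pos : (0 : ℝ) < τ := by
    have := hratio A₀ hA₀ hπA₀ hπA₀_le
    exact Nat.cast_pos.mpr (Nat.pos_of_ne_zero fun h => by norm_num [h] at this)
  have hΦ_ge : 1 / (4 * τ) ≤ Φ := by
    rw [hΦ]
    refine le_csInf ⟨_, A₀, hA₀, hπA₀, hπA₀_le, rfl⟩ ?_
    rintro _ ⟨A, hA, hπA, hπA_le, rfl⟩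
    change 1 / (4 * τ) ≤ K.bottleneckRatio π A
    rw [div_le_iff₀ (by positivity)]
    linarith [hratio A hA hπA hπA_le]
  have hΦ_pos : 0 < Φ := lt_of_lt_of_le (by positivity) hΦ_ge
  rw [div_le_iff₀ (by positivity)] at hΦ_ge
  rw [div_le_iff₀ (by positivity)]
  linarith
end

section
/- Let π be a probability measure on ℝ^d with density ρ with respect to Lebesgue measure. Fix a family H of Borel sets each of which is a union of at most m axis-parallel rectangles with all side lengths at least ε (or complements of such). Then lim_{δ→0} sup_{S ∈ H} |π(S_δ) − π(S)| = 0, where S_δ = { x : inf_{y∈S} |x−y|_∞ ≤ δ } is the δ-thickening of S. -/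
/-!
A point of `S_δ \ S` lies within `δ` of the frontier of `S`, since the segment joining it to a
nearby point of `S` crosses that frontier. The frontier of a set in `𝓗_{ε,m}` lies on at most
`2md` coordinate hyperplanes, so `π(S_δ \ S)` is at most `2md` times the largest `π`-mass of a slab
`{x | |x i - c| ≤ δ}`. Such a mass is the mass of an interval of length `2δ` under a marginal of
`π`; the marginals are absolutely continuous, so it tends to `0` uniformly in `c`.
-/

open MeasureTheory Set Filter

/-- `R` is an axis-parallel closed rectangle in `ℝ^d` all of whose side lengths are
at least `ε`. -/
def IsBigRect (d : ℕ) (ε : ℝ) (R : Set (Fin d → ℝ)) : Prop :=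
  ∃ a b : Fin d → ℝ, (∀ i, ε ≤ b i - a i) ∧ R = Set.Icc a b

/-- `S` belongs to the class `𝓗_{ε,m}`: it is a union of at most `m` sets, each of
which is a big rectangle or the complement of one, or the complement of such a union. -/
def InHClass (d : ℕ) (ε : ℝ) (m : ℕ) (S : Set (Fin d → ℝ)) : Prop :=
  ∃ (k : ℕ), 1 ≤ k ∧ k ≤ m ∧ ∃ R : Fin k → Set (Fin d → ℝ),
    (∀ j, IsBigRect d ε (R j) ∨ IsBigRect d ε (R j)ᶜ) ∧
    (S = ⋃ j, R j ∨ S = (⋃ j, R j)ᶜ)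

open Metric Topology
open scoped ENNReal

theorem IsPreconnected.inter_frontier_nonempty {X : Type*} [TopologicalSpace X] {c s : Set X}
    (hc : IsPreconnected c) {x y : X} (hx : x ∈ c) (hxs : x ∉ s) (hy : y ∈ c) (hys : y ∈ s) :
    (c ∩ frontier s).Nonempty := by
  by_contra! h
  have hcover : c ⊆ (closure s)ᶜ ∪ interior s := fun z hz => by
    by_cases hzs : z ∈ closure s
    · exact Or.inr (by_contra fun hzi => h.subset ⟨hz, hzs, hzi⟩)
    · exact Or.inl hzs
  have hdisj : Disjoint (closure s)ᶜ (interior s) :=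
    disjoint_compl_left.mono_right interior_subset_closure
  rcases hc.subset_or_subset isClosed_closure.isOpen_compl isOpen_interior hdisj hcover with
    hout | hin
  · exact hout hy (subset_closure hys)
  · exact hxs (interior_subset (hin hx))

section NormedSpace

variable {E : Type*} [SeminormedAddCommGroup E] [NormedSpace ℝ E]

theorem Metric.thickening_diff_subset_thickening_frontier (δ : ℝ) (s : Set E) :
    thickening δ s \ s ⊆ thickening δ (frontier s) := by
  rintro x ⟨hx, hxs⟩
  obtain ⟨y, hys, hxy⟩ := mem_thickening_iff.1 hx
  obtain ⟨z, hz, hzs⟩ := (convex_segment x y).isPreconnected.inter_frontier_nonempty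
    (left_mem_segment ℝ x y) hxs (right_mem_segment ℝ x y) hys
  refine mem_thickening_iff.2 ⟨z, hzs, lt_of_le_of_lt ?_ hxy⟩
  linarith [dist_add_dist_of_mem_segment hz, dist_nonneg (x := z) (y := y)]

theorem Metric.cthickening_diff_subset_cthickening_frontier (δ : ℝ) (s : Set E) :
    cthickening δ s \ s ⊆ cthickening δ (frontier s) := by
  rw [cthickening_eq_iInter_thickening'', cthickening_eq_iInter_thickening'']
  rintro x ⟨hx, hxs⟩
  simp only [mem_iInter] at hx ⊢
  exact fun r hr => thickening_diff_subset_thickening_frontier r s ⟨hx r hr, hxs⟩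

end NormedSpace

theorem Metric.cthickening_iUnion_subset {α ι : Type*} [PseudoEMetricSpace α] [Finite ι] (δ : ℝ)
    (s : ι → Set α) : cthickening δ (⋃ i, s i) ⊆ ⋃ i, cthickening δ (s i) := by
  intro x hx
  rw [mem_cthickening_iff, infEDist_iUnion] at hx
  rcases isEmpty_or_nonempty ι with hι | hι
  · simp [iInf_of_empty] at hx
  obtain ⟨i, hi⟩ := exists_eq_ciInf_of_finite (f := fun i => infEDist x (s i))
  exact mem_iUnion.2 ⟨i, mem_cthickening_iff.2 (hi ▸ hx)⟩

theorem LipschitzWith.cthickening_preimage_subset {α β : Type*} [PseudoEMetricSpace α]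
    [PseudoEMetricSpace β] {f : α → β} (hf : LipschitzWith 1 f) (δ : ℝ) (t : Set β) :
    cthickening δ (f ⁻¹' t) ⊆ f ⁻¹' cthickening δ t := by
  intro x hx
  have : infEDist (f x) t ≤ infEDist x (f ⁻¹' t) := le_infEDist.2 fun y hy =>
    (infEDist_le_edist_of_mem (x := f x) (s := t) hy).trans (by simpa using hf.edist_le_mul x y)
  exact mem_cthickening_iff.2 (this.trans (mem_cthickening_iff.1 hx))

theorem frontier_iUnion_subset_of_finite {X ι : Type*} [TopologicalSpace X] [Finite ι]
    (s : ι → Set X) : frontier (⋃ i, s i) ⊆ ⋃ i, frontier (s i) := by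
  rw [frontier, closure_iUnion_of_finite]
  rintro x ⟨hx, hxi⟩
  obtain ⟨i, hi⟩ := mem_iUnion.1 hx
  exact mem_iUnion.2 ⟨i, hi, fun h => hxi (interior_mono (subset_iUnion s i) h)⟩

theorem frontier_pi_Icc_subset {ι : Type*} [Finite ι] (a b : ι → ℝ) :
    frontier (Icc a b) ⊆ ⋃ i, Function.eval i ⁻¹' {a i, b i} := by
  rw [frontier, isClosed_Icc.closure_eq, ← pi_univ_Icc, interior_pi_set finite_univ]
  rintro x ⟨hx, hxi⟩
  simp only [interior_Icc, mem_univ_pi, not_forall] at hx hxi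
  obtain ⟨i, hi⟩ := hxi
  refine mem_iUnion.2 ⟨i, ?_⟩
  rcases (hx i).1.eq_or_lt with h | h
  · exact Or.inl h.symm
  · exact Or.inr ((hx i).2.eq_or_lt.resolve_right fun h' => hi ⟨h, h'⟩)

theorem InHClass.exists_frontier_subset {d : ℕ} {ε : ℝ} {m : ℕ} {S : Set (Fin d → ℝ)}
    (hS : InHClass d ε m S) :
    ∃ k ≤ m, ∃ a b : Fin k → Fin d → ℝ,
      frontier S ⊆ ⋃ p : Fin k × Fin d, Function.eval p.2 ⁻¹' {a p.1 p.2, b p.1 p.2} := by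
  obtain ⟨k, -, hkm, R, hR, hSR⟩ := hS
  have hbox : ∀ j, ∃ a b : Fin d → ℝ, frontier (R j) = frontier (Icc a b) := fun j => by
    rcases hR j with ⟨a, b, -, h⟩ | ⟨a, b, -, h⟩
    · exact ⟨a, b, by rw [h]⟩
    · exact ⟨a, b, by rw [← frontier_compl, h]⟩
  choose a b hab using hbox
  have hS : frontier S ⊆ ⋃ j, frontier (R j) := by
    rcases hSR with rfl | rfl
    · exact frontier_iUnion_subset_of_finite R
    · exact (frontier_compl _).subset.trans (frontier_iUnion_subset_of_finite R)
  refine ⟨k, hkm, a, b, hS.trans (iUnion_subset fun j => ?_)⟩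
  rw [hab j]
  exact (frontier_pi_Icc_subset _ _).trans
    (iUnion_subset fun i => subset_iUnion_of_subset (j, i) le_rfl)

section Slab

variable {ι : Type*}

noncomputable def slabModulus (μ : Measure (ι → ℝ)) (δ : ℝ) : ℝ≥0∞ :=
  ⨆ (i : ι) (c : ℝ), μ (Function.eval i ⁻¹' closedBall c δ)

theorem slabModulus_ne_top (μ : Measure (ι → ℝ)) [IsFiniteMeasure μ] (δ : ℝ) :
    slabModulus μ δ ≠ ∞ :=
  ne_top_of_le_ne_top (measure_ne_top μ univ) (iSup₂_le fun _ _ => measure_mono (subset_univ _))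

theorem measure_cthickening_eval_preimage_pair_le [Fintype ι] (μ : Measure (ι → ℝ)) {δ : ℝ}
    (hδ : 0 ≤ δ) (i : ι) (s t : ℝ) :
    μ (cthickening δ (Function.eval i ⁻¹' {s, t})) ≤ 2 * slabModulus μ δ := by
  have hslab : ∀ c, μ (Function.eval i ⁻¹' closedBall c δ) ≤ slabModulus μ δ := fun c =>
    le_iSup₂ (f := fun i c => μ (Function.eval i ⁻¹' closedBall c δ)) i c
  calc μ (cthickening δ (Function.eval i ⁻¹' {s, t}))
      ≤ μ (Function.eval i ⁻¹' (closedBall s δ ∪ closedBall t δ)) := by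
        refine measure_mono ((LipschitzWith.eval i).cthickening_preimage_subset δ _ |>.trans ?_)
        rw [insert_eq, cthickening_union, cthickening_singleton _ hδ, cthickening_singleton _ hδ]
    _ ≤ slabModulus μ δ + slabModulus μ δ :=
        (measure_union_le _ _).trans (add_le_add (hslab s) (hslab t))
    _ = 2 * slabModulus μ δ := (two_mul _).symm

theorem MeasureTheory.Measure.AbsolutelyContinuous.exists_pos_forall_measure_lt {α : Type*}
    [MeasurableSpace α] {μ ν : Measure α} [IsFiniteMeasure μ] [SigmaFinite ν] (h : μ ≪ ν)
    {ε : ℝ≥0∞} (hε : ε ≠ 0) : ∃ η > 0, ∀ s, ν s < η → μ s < ε := by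
  obtain ⟨η, hη, hlt⟩ :=
    exists_pos_setLIntegral_lt_of_measure_lt (Measure.lintegral_rnDeriv_lt_top μ ν).ne hε
  exact ⟨η, hη, fun s hs => Measure.setLIntegral_rnDeriv h s ▸ hlt s hs⟩

theorem tendsto_slabModulus_nhdsGT_zero [Fintype ι] {μ : Measure (ι → ℝ)} [IsFiniteMeasure μ]
    (hμ : μ ≪ volume) : Tendsto (slabModulus μ) (𝓝[>] 0) (𝓝 0) := by
  have hmarginal : ∀ i, μ.map (Function.eval i) ≪ volume := fun i =>
    (hμ.map (measurable_pi_apply i)).trans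
      (Measure.quasiMeasurePreserving_eval (fun _ => volume) i).absolutelyContinuous
  have hwidth : Tendsto (fun δ : ℝ => ENNReal.ofReal (2 * δ)) (𝓝[>] 0) (𝓝 0) :=
    ((ENNReal.continuous_ofReal.comp (continuous_const_mul 2)).tendsto' 0 0 (by simp)).mono_left
      nhdsWithin_le_nhds
  rw [ENNReal.tendsto_nhds_zero]
  intro ε hε
  choose η hη hsmall using fun i => (hmarginal i).exists_pos_forall_measure_lt hε.ne'
  filter_upwards [eventually_all.2 fun i => hwidth.eventually (gt_mem_nhds (hη i))] with δ hδ
  refine iSup₂_le fun i c => ?_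
  rw [← Measure.map_apply (measurable_pi_apply i) measurableSet_closedBall]
  exact (hsmall i _ (by rw [Real.volume_closedBall]; exact hδ i)).le

end Slab

theorem InHClass.measure_cthickening_le {d : ℕ} {ε : ℝ} {m : ℕ} {S : Set (Fin d → ℝ)}
    (hS : InHClass d ε m S) (μ : Measure (Fin d → ℝ)) {δ : ℝ} (hδ : 0 ≤ δ) :
    μ (cthickening δ S) ≤ μ S + 2 * m * d * slabModulus μ δ := by
  obtain ⟨k, hkm, a, b, hfr⟩ := hS.exists_frontier_subset
  have hbad : cthickening δ S \ S ⊆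
      ⋃ p : Fin k × Fin d, cthickening δ (Function.eval p.2 ⁻¹' {a p.1 p.2, b p.1 p.2}) :=
    (cthickening_diff_subset_cthickening_frontier δ S).trans
      ((cthickening_subset_of_subset δ hfr).trans (cthickening_iUnion_subset δ _))
  calc μ (cthickening δ S) ≤ μ S + μ (cthickening δ S \ S) := tsub_le_iff_left.1 le_measure_sdiff
    _ ≤ μ S + ∑ _p : Fin k × Fin d, 2 * slabModulus μ δ := by
        gcongr
        exact (measure_mono hbad).trans ((measure_iUnion_fintype_le _ _).trans
          (Finset.sum_le_sum fun p _ => measure_cthickening_eval_preimage_pair_le μ hδ _ _ _))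
    _ = μ S + k * (2 * d * slabModulus μ δ) := by
        simp only [Finset.sum_const, Finset.card_univ, Fintype.card_prod, Fintype.card_fin,
          nsmul_eq_mul, Nat.cast_mul]
        ring
    _ ≤ μ S + m * (2 * d * slabModulus μ δ) := by gcongr
    _ = μ S + 2 * m * d * slabModulus μ δ := by ring

theorem InHClass.abs_measure_cthickening_sub_le {d : ℕ} {ε : ℝ} {m : ℕ} {S : Set (Fin d → ℝ)}
    (hS : InHClass d ε m S) (μ : Measure (Fin d → ℝ)) [IsFiniteMeasure μ] {δ : ℝ} (hδ : 0 ≤ δ) :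
    |(μ (cthickening δ S)).toReal - (μ S).toReal| ≤ (2 * m * d * slabModulus μ δ).toReal := by
  have hmono : μ S ≤ μ (cthickening δ S) := measure_mono (self_subset_cthickening S)
  rw [abs_of_nonneg (sub_nonneg.2 (ENNReal.toReal_mono (measure_ne_top _ _) hmono)),
    ← ENNReal.toReal_sub_of_le hmono (measure_ne_top _ _)]
  exact ENNReal.toReal_mono (by finiteness [slabModulus_ne_top μ δ])
    (tsub_le_iff_left.2 (hS.measure_cthickening_le μ hδ))

theorem tendsto_sup_thickening_measure_general {d : ℕ} (ε : ℝ) (m : ℕ)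
    (ρ : (Fin d → ℝ) → ℝ)
    (π : Measure (Fin d → ℝ))
    (hπ : π = volume.withDensity (fun x => ENNReal.ofReal (ρ x)))
    [IsProbabilityMeasure π]
    (H : Set (Set (Fin d → ℝ))) (hH : ∀ S ∈ H, InHClass d ε m S) :
    Tendsto
      (fun δ : ℝ => ⨆ S ∈ H,
        |(π (Metric.cthickening δ S)).toReal - (π S).toReal|)
      (nhdsWithin 0 (Set.Ioi 0)) (nhds 0) := by
  have hπac : π ≪ volume := hπ ▸ withDensity_absolutelyContinuous _ _
  have hbound : Tendsto (fun δ => (2 * m * d * slabModulus π δ).toReal) (𝓝[>] 0) (𝓝 0) := by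
    have h := ENNReal.Tendsto.const_mul (tendsto_slabModulus_nhdsGT_zero hπac)
      (Or.inr (by finiteness : (2 * m * d : ℝ≥0∞) ≠ ∞))
    rw [mul_zero] at h
    simpa only [Function.comp_def, ENNReal.toReal_zero] using
      (ENNReal.tendsto_toReal ENNReal.zero_ne_top).comp h
  refine squeeze_zero' (Eventually.of_forall fun δ =>
    Real.iSup_nonneg fun S => Real.iSup_nonneg fun _ => abs_nonneg _) ?_ hbound
  filter_upwards [self_mem_nhdsWithin] with δ hδ
  exact Real.iSup_le (fun S => Real.iSup_le (fun hS =>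
    (hH S hS).abs_measure_cthickening_sub_le π (le_of_lt hδ)) ENNReal.toReal_nonneg)
    ENNReal.toReal_nonneg

/-- For a probability measure `π` on `ℝ^d` with density `ρ` with respect to Lebesgue
measure and any family `H` of sets from `𝓗_{ε,m}`, the measures of the closed
`δ`-thickenings `S_δ` (in the sup metric) converge to the measures of the sets `S`
uniformly over `S ∈ H` as `δ → 0⁺`. -/
theorem tendsto_sup_thickening_measure {d : ℕ} (ε : ℝ) (hε : 0 < ε) (m : ℕ)
    (ρ : (Fin d → ℝ) → ℝ) (hρ : Measurable ρ) (hρnonneg : ∀ x, 0 ≤ ρ x)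
    (π : Measure (Fin d → ℝ))
    (hπ : π = volume.withDensity (fun x => ENNReal.ofReal (ρ x)))
    [IsProbabilityMeasure π]
    (H : Set (Set (Fin d → ℝ))) (hH : ∀ S ∈ H, InHClass d ε m S) :
    Tendsto
      (fun δ : ℝ => ⨆ S ∈ H,
        |(π (Metric.cthickening δ S)).toReal - (π S).toReal|)
      (nhdsWithin 0 (Set.Ioi 0)) (nhds 0) :=
  tendsto_sup_thickening_measure_general ε m ρ π hπ H hH
end
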